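/- For n > 0, the weighted partition function Z₂(n) = ∫_{ℝ²} |w2|·exp(-n·w1^2·w2^4)·(1/(2π))·exp(-(w1^2+w2^2)/2) dw1 dw2 satisfies n^{1/2}·Z₂(n)/log n → (1/(4π))·Γ(1/2) = 1/(4√π) as n → ∞. -/

import Mathlib

open Real MeasureTheory Filter

/-- Weighted partition function with weight `|w2|` for `f(w1,w2) = w1^2 w2^4`. -/
noncomputable def Z2b (n : ℝ) : ℝ :=
  ∫ w1 : ℝ, ∫ w2 : ℝ,
    |w2| * Real.exp (-(n * (w1 ^ 2 * w2 ^ 4))) *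
      (1 / (2 * π) * Real.exp (-(w1 ^ 2 + w2 ^ 2) / 2))

/-!
Integrating out `w1` is a Gaussian integral with parameter `n w2⁴ + 1/2`; folding `w2` onto
`(0, ∞)` then gives `Z₂(n) = π^(-1/2) ∫₀^∞ x e^(-x²/2) / √(n x⁴ + 1/2) dx`. The kernel
`x / √(n x⁴ + 1/2)` is at most `1 / (√n x)` and has the explicit primitive
`arsinh (√(2n) x²) / (2√n)`. Dropping the Gaussian factor on `(0, 1]` and discarding the tail over
`(1, ∞)` both cost only `O(n^(-1/2))`, so `√n Z₂(n) = arsinh (√(2n)) / (2√π) + O(1)`, and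
`arsinh y = log (2y) + o(1)` turns this into `(log n) / (4√π) + O(1)`.
-/

open Set

lemma integrable_mul_exp_neg_sq_div_two : Integrable fun x : ℝ => x * exp (-x ^ 2 / 2) := by
  convert integrable_mul_exp_neg_mul_sq (one_half_pos (α := ℝ)) using 4
  ring

lemma integrable_exp_neg_sq_div_two : Integrable fun x : ℝ => exp (-x ^ 2 / 2) := by
  convert integrable_exp_neg_mul_sq (one_half_pos (α := ℝ)) using 3
  ring

noncomputable def quarticKernel (n x : ℝ) : ℝ := x / √(n * x ^ 4 + 1 / 2)

section QuarticKernel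

variable {n x : ℝ}

lemma sqrt_mul_pow_four_add_half_pos (hn : 0 ≤ n) (x : ℝ) : 0 < √(n * x ^ 4 + 1 / 2) :=
  Real.sqrt_pos.2 (by positivity)

lemma continuous_quarticKernel (hn : 0 ≤ n) : Continuous (quarticKernel n) :=
  continuous_id.div (by fun_prop) fun x => (sqrt_mul_pow_four_add_half_pos hn x).ne'

lemma continuous_quarticKernel_mul_exp (hn : 0 ≤ n) :
    Continuous fun x => quarticKernel n x * exp (-x ^ 2 / 2) :=
  (continuous_quarticKernel hn).mul (by fun_prop)

lemma quarticKernel_nonneg (hn : 0 ≤ n) (hx : 0 ≤ x) : 0 ≤ quarticKernel n x :=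
  div_nonneg hx (sqrt_mul_pow_four_add_half_pos hn x).le

lemma quarticKernel_le (hn : 0 < n) (hx : 0 < x) : quarticKernel n x ≤ (√n * x)⁻¹ := by
  have hlow : √n * x ^ 2 ≤ √(n * x ^ 4 + 1 / 2) := by
    rw [← Real.sqrt_sq (sq_nonneg x), ← Real.sqrt_mul hn.le, ← pow_mul]
    exact Real.sqrt_le_sqrt (by linarith)
  calc quarticKernel n x ≤ x / (√n * x ^ 2) :=
        div_le_div_of_nonneg_left hx.le (by positivity) hlow
    _ = (√n * x)⁻¹ := by field_simp

lemma hasDerivAt_arsinh_quartic (hn : 0 < n) (x : ℝ) :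
    HasDerivAt (fun y => arsinh (√(2 * n) * y ^ 2) / (2 * √n)) (quarticKernel n x) x := by
  have hsq := ((hasDerivAt_pow 2 x).const_mul (√(2 * n))).arsinh.div_const (2 * √n)
  refine hsq.congr_deriv ?_
  have h1 : √(1 + (√(2 * n) * x ^ 2) ^ 2) = √2 * √(n * x ^ 4 + 1 / 2) := by
    rw [← Real.sqrt_mul zero_le_two, mul_pow, Real.sq_sqrt (by positivity)]
    ring_nf
  have := sqrt_mul_pow_four_add_half_pos hn.le x
  have : 0 < √n := Real.sqrt_pos.2 hn
  rw [h1, Real.sqrt_mul zero_le_two, quarticKernel, smul_eq_mul]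
  field_simp
  ring

lemma integral_quarticKernel_zero_one (hn : 0 < n) :
    ∫ x in (0 : ℝ)..1, quarticKernel n x = arsinh (√(2 * n)) / (2 * √n) := by
  rw [intervalIntegral.integral_eq_sub_of_hasDerivAt (fun x _ => hasDerivAt_arsinh_quartic hn x)
    ((continuous_quarticKernel hn.le).intervalIntegrable _ _)]
  simp

lemma abs_setIntegral_Ioc_quarticKernel_mul_exp_sub_le (hn : 0 < n) :
    |(∫ x in Ioc 0 1, quarticKernel n x * exp (-x ^ 2 / 2)) - ∫ x in Ioc 0 1, quarticKernel n x|
      ≤ 1 / (2 * √n) := by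
  have hK : IntegrableOn (quarticKernel n) (Ioc 0 1) :=
    (continuous_quarticKernel hn.le).integrableOn_Ioc
  have hKe : IntegrableOn (fun x => quarticKernel n x * exp (-x ^ 2 / 2)) (Ioc 0 1) :=
    (continuous_quarticKernel_mul_exp hn.le).integrableOn_Ioc
  have hpt : ∀ x ∈ Ioc (0 : ℝ) 1,
      ‖quarticKernel n x * exp (-x ^ 2 / 2) - quarticKernel n x‖ ≤ 1 / (2 * √n) := by
    rintro x ⟨hx0, hx1⟩
    have hexp : 1 - x ^ 2 / 2 ≤ exp (-x ^ 2 / 2) := by linarith [add_one_le_exp (-x ^ 2 / 2)]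
    have hexp' : exp (-x ^ 2 / 2) ≤ 1 := exp_le_one_iff.2 (by nlinarith)
    have hk0 := quarticKernel_nonneg hn.le hx0.le
    rw [Real.norm_eq_abs, abs_sub_comm, abs_of_nonneg (by nlinarith)]
    calc quarticKernel n x - quarticKernel n x * exp (-x ^ 2 / 2)
        = quarticKernel n x * (1 - exp (-x ^ 2 / 2)) := by ring
      _ ≤ (√n * x)⁻¹ * (x ^ 2 / 2) := by
          gcongr
          · exact quarticKernel_le hn hx0
          · linarith
      _ = x / (2 * √n) := by field_simp
      _ ≤ 1 / (2 * √n) := by gcongr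
  rw [← integral_sub hKe hK, ← Real.norm_eq_abs]
  have := norm_setIntegral_le_of_norm_le_const (μ := volume) measure_Ioc_lt_top hpt
  simpa using this

lemma quarticKernel_mul_exp_le_of_one_lt (hn : 0 < n) (hx : 1 < x) :
    quarticKernel n x * exp (-x ^ 2 / 2) ≤ (√n)⁻¹ * (x * exp (-x ^ 2 / 2)) := by
  have hsn : 0 < √n := Real.sqrt_pos.2 hn
  calc quarticKernel n x * exp (-x ^ 2 / 2) ≤ (√n * x)⁻¹ * exp (-x ^ 2 / 2) := by
        gcongr; exact quarticKernel_le hn (by linarith)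
    _ ≤ (√n)⁻¹ * (x * exp (-x ^ 2 / 2)) := by
        rw [mul_inv, mul_assoc]
        gcongr
        exact (inv_le_one_of_one_le₀ hx.le).trans hx.le

lemma integrableOn_Ioi_one_quarticKernel_mul_exp (hn : 0 < n) :
    IntegrableOn (fun x => quarticKernel n x * exp (-x ^ 2 / 2)) (Ioi 1) := by
  refine ((integrable_mul_exp_neg_sq_div_two.const_mul (√n)⁻¹).integrableOn).mono'
    (continuous_quarticKernel_mul_exp hn.le).aestronglyMeasurable
    ((ae_restrict_iff' measurableSet_Ioi).2 (.of_forall fun x (hx : 1 < x) => ?_))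
  rw [Real.norm_eq_abs, abs_of_nonneg
    (mul_nonneg (quarticKernel_nonneg hn.le (by linarith)) (exp_pos _).le)]
  exact quarticKernel_mul_exp_le_of_one_lt hn hx

lemma setIntegral_Ioi_one_quarticKernel_mul_exp_le (hn : 0 < n) :
    ∫ x in Ioi 1, quarticKernel n x * exp (-x ^ 2 / 2)
      ≤ (∫ x in Ioi 1, x * exp (-x ^ 2 / 2)) / √n := by
  calc ∫ x in Ioi 1, quarticKernel n x * exp (-x ^ 2 / 2)
      ≤ ∫ x in Ioi 1, (√n)⁻¹ * (x * exp (-x ^ 2 / 2)) :=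
        setIntegral_mono_on (integrableOn_Ioi_one_quarticKernel_mul_exp hn)
          (integrable_mul_exp_neg_sq_div_two.const_mul _).integrableOn measurableSet_Ioi
          fun x hx => quarticKernel_mul_exp_le_of_one_lt hn hx
    _ = (∫ x in Ioi 1, x * exp (-x ^ 2 / 2)) / √n := by rw [integral_const_mul]; ring

end QuarticKernel

noncomputable def Z2bReduced (n : ℝ) : ℝ := ∫ x in Ioi 0, quarticKernel n x * exp (-x ^ 2 / 2)

section Reduction

variable {n : ℝ}

lemma Z2b_integrand_eq (n w1 w2 : ℝ) :
    |w2| * exp (-(n * (w1 ^ 2 * w2 ^ 4))) * (1 / (2 * π) * exp (-(w1 ^ 2 + w2 ^ 2) / 2))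
      = |w2| * exp (-w2 ^ 2 / 2) / (2 * π) * exp (-(n * w2 ^ 4 + 1 / 2) * w1 ^ 2) := by
  have h : exp (-(n * (w1 ^ 2 * w2 ^ 4))) * exp (-(w1 ^ 2 + w2 ^ 2) / 2)
      = exp (-w2 ^ 2 / 2) * exp (-(n * w2 ^ 4 + 1 / 2) * w1 ^ 2) := by
    rw [← exp_add, ← exp_add]; ring_nf
  linear_combination |w2| / (2 * π) * h

lemma integrable_Z2b_integrand (hn : 0 ≤ n) :
    Integrable (Function.uncurry fun w1 w2 : ℝ =>
      |w2| * exp (-(n * (w1 ^ 2 * w2 ^ 4))) * (1 / (2 * π) * exp (-(w1 ^ 2 + w2 ^ 2) / 2)))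
      (volume.prod volume) := by
  have habs : Integrable fun x : ℝ => |x| * exp (-x ^ 2 / 2) :=
    integrable_mul_exp_neg_sq_div_two.abs.congr (.of_forall fun x => by simp [abs_mul])
  have hdom := (integrable_exp_neg_sq_div_two.div_const (2 * π)).mul_prod habs
  refine hdom.mono' (Continuous.aestronglyMeasurable (by fun_prop))
    (.of_forall fun ⟨w1, w2⟩ => ?_)
  have hw1 : exp (-(n * w2 ^ 4 + 1 / 2) * w1 ^ 2) ≤ exp (-w1 ^ 2 / 2) := by
    have : 0 ≤ n * w2 ^ 4 * w1 ^ 2 := by positivity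
    exact exp_le_exp.2 (by nlinarith)
  rw [Function.uncurry_apply_pair, Z2b_integrand_eq, Real.norm_eq_abs,
    abs_of_nonneg (by positivity)]
  calc |w2| * exp (-w2 ^ 2 / 2) / (2 * π) * exp (-(n * w2 ^ 4 + 1 / 2) * w1 ^ 2)
      ≤ |w2| * exp (-w2 ^ 2 / 2) / (2 * π) * exp (-w1 ^ 2 / 2) := by gcongr
    _ = _ := by ring

lemma integral_Z2b_integrand_fst (n w2 : ℝ) :
    ∫ w1, |w2| * exp (-(n * (w1 ^ 2 * w2 ^ 4))) * (1 / (2 * π) * exp (-(w1 ^ 2 + w2 ^ 2) / 2))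
      = |w2| * exp (-w2 ^ 2 / 2) / (2 * π) * √(π / (n * w2 ^ 4 + 1 / 2)) := by
  simp_rw [Z2b_integrand_eq]
  rw [integral_const_mul, integral_gaussian]

lemma Z2b_eq_inv_sqrt_pi_mul_Z2bReduced (hn : 0 ≤ n) : Z2b n = (√π)⁻¹ * Z2bReduced n := by
  have hpi := pi_pos
  have hsym := integral_comp_abs
    (f := fun x => x * exp (-x ^ 2 / 2) / (2 * π) * √(π / (n * x ^ 4 + 1 / 2)))
  simp only [sq_abs, (by decide : Even 4).pow_abs] at hsym
  rw [Z2b, integral_integral_swap (integrable_Z2b_integrand hn)]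
  simp_rw [integral_Z2b_integrand_fst]
  rw [hsym, Z2bReduced, ← integral_const_mul, ← integral_const_mul]
  refine setIntegral_congr_fun measurableSet_Ioi fun x _ => ?_
  have := sqrt_mul_pow_four_add_half_pos hn x
  have : 0 < √π := Real.sqrt_pos.2 hpi
  rw [Real.sqrt_div hpi.le, quarticKernel]
  field_simp
  rw [Real.sq_sqrt hpi.le]

end Reduction

lemma tendsto_arsinh_sub_log_atTop : Tendsto (fun x => arsinh x - log x) atTop (nhds (log 2)) := by
  have hlim : Tendsto (fun x : ℝ => log (1 + √(x⁻¹ ^ 2 + 1))) atTop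
      (nhds (log (1 + √(0 ^ 2 + 1)))) :=
    ((((tendsto_inv_atTop_zero.pow 2).add_const 1).sqrt).const_add 1).log (by positivity)
  rw [zero_pow two_ne_zero, zero_add, Real.sqrt_one, one_add_one_eq_two] at hlim
  refine hlim.congr' ((eventually_gt_atTop 0).mono fun x hx => ?_)
  have hsq : √(x⁻¹ ^ 2 + 1) = √(1 + x ^ 2) / x := by
    rw [show x⁻¹ ^ 2 + 1 = (1 + x ^ 2) / x ^ 2 by field_simp,
      Real.sqrt_div' _ (sq_nonneg x), Real.sqrt_sq hx.le]
  rw [hsq, one_add_div hx.ne', log_div (by positivity) hx.ne']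
  rfl

lemma exists_abs_Z2bReduced_sub_le :
    ∃ C, ∀ n : ℝ, 0 < n → |Z2bReduced n - arsinh (√(2 * n)) / (2 * √n)| ≤ C / √n := by
  refine ⟨1 / 2 + ∫ x in Ioi 1, x * exp (-x ^ 2 / 2), fun n hn => ?_⟩
  have hsplit : Z2bReduced n = (∫ x in Ioc 0 1, quarticKernel n x * exp (-x ^ 2 / 2))
      + ∫ x in Ioi 1, quarticKernel n x * exp (-x ^ 2 / 2) := by
    rw [Z2bReduced, ← Ioc_union_Ioi_eq_Ioi zero_le_one,
      setIntegral_union (Ioc_disjoint_Ioi le_rfl) measurableSet_Ioi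
        (continuous_quarticKernel_mul_exp hn.le).integrableOn_Ioc
        (integrableOn_Ioi_one_quarticKernel_mul_exp hn)]
  have hexact : arsinh (√(2 * n)) / (2 * √n) = ∫ x in Ioc 0 1, quarticKernel n x := by
    rw [← integral_quarticKernel_zero_one hn, intervalIntegral.integral_of_le zero_le_one]
  have hnear := abs_setIntegral_Ioc_quarticKernel_mul_exp_sub_le hn
  have htail := setIntegral_Ioi_one_quarticKernel_mul_exp_le hn
  have htail_nonneg : 0 ≤ ∫ x in Ioi 1, quarticKernel n x * exp (-x ^ 2 / 2) :=
    setIntegral_nonneg measurableSet_Ioi fun x (hx : 1 < x) =>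
      mul_nonneg (quarticKernel_nonneg hn.le (by linarith)) (exp_pos _).le
  have hC : (1 / 2 + ∫ x in Ioi 1, x * exp (-x ^ 2 / 2)) / √n
      = 1 / (2 * √n) + (∫ x in Ioi 1, x * exp (-x ^ 2 / 2)) / √n := by ring
  rw [hsplit, hexact, hC]
  rw [abs_le] at hnear ⊢
  constructor <;> linarith [hnear.1, hnear.2]

lemma isBigO_sqrt_mul_Z2bReduced_sub_log :
    (fun n => √n * Z2bReduced n - log n / 4) =O[atTop] fun _ => (1 : ℝ) := by
  obtain ⟨C, hC⟩ := exists_abs_Z2bReduced_sub_le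
  have harsinh := (tendsto_arsinh_sub_log_atTop.comp
    (tendsto_sqrt_atTop.comp (tendsto_id.const_mul_atTop two_pos))).isBigO_one ℝ
  have herr : (fun n => √n * (Z2bReduced n - arsinh (√(2 * n)) / (2 * √n)))
      =O[atTop] fun _ => (1 : ℝ) := by
    refine Asymptotics.IsBigO.of_bound C ((eventually_gt_atTop 0).mono fun n hn => ?_)
    have hsn : 0 < √n := Real.sqrt_pos.2 hn
    rw [norm_one, mul_one, norm_mul, Real.norm_eq_abs, Real.norm_eq_abs, abs_of_pos hsn]
    calc √n * |Z2bReduced n - arsinh (√(2 * n)) / (2 * √n)| ≤ √n * (C / √n) := by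
          gcongr; exact hC n hn
      _ = C := by field_simp
  refine ((harsinh.const_mul_left (1 / 2)).add
    ((Asymptotics.isBigO_const_one ℝ (log 2 / 4) atTop).add herr)).congr' ?_ .rfl
  filter_upwards [eventually_gt_atTop 0] with n hn
  have hsn : 0 < √n := Real.sqrt_pos.2 hn
  have hlog : log √(2 * n) = (log 2 + log n) / 2 := by
    rw [Real.log_sqrt (by positivity), log_mul two_ne_zero hn.ne']
  simp only [Function.comp_apply, id]
  rw [hlog]
  field_simp
  ring

lemma tendsto_sqrt_mul_Z2bReduced_div_log :
    Tendsto (fun n => √n * Z2bReduced n / log n) atTop (nhds (1 / 4)) := by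
  have hlog_inv : Tendsto (fun n => (log n)⁻¹) atTop (nhds 0) :=
    tendsto_inv_atTop_zero.comp tendsto_log_atTop
  have hrem := ((isBigO_sqrt_mul_Z2bReduced_sub_log.mul
    (Asymptotics.isBigO_refl (fun n => (log n)⁻¹) atTop)).trans_tendsto
    (by simpa using hlog_inv))
  rw [← add_zero (1 / 4 : ℝ)]
  refine (hrem.const_add (1 / 4)).congr' ((eventually_gt_atTop 1).mono fun n hn => ?_)
  have := (log_pos hn).ne'
  field_simp
  ring

/-- `n^(1/2)·Z₂(n)/log n → (1/(4π))·Γ(1/2) = 1/(4√π)` as `n → ∞`. -/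
theorem Z2b_asymptotic :
    Tendsto (fun n : ℝ => n ^ (1/2 : ℝ) * Z2b n / Real.log n) atTop
      (nhds (1 / (4 * Real.sqrt π))) := by
  have hlim := tendsto_sqrt_mul_Z2bReduced_div_log.const_mul (√π)⁻¹
  rw [show (√π)⁻¹ * (1 / 4) = 1 / (4 * √π) by ring] at hlim
  refine hlim.congr' ((eventually_ge_atTop 0).mono fun n hn => ?_)
  dsimp only
  rw [← Real.sqrt_eq_rpow, Z2b_eq_inv_sqrt_pi_mul_Z2bReduced hn]
  ring
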